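/- arXiv:2110.12792 — 8 statements merged into one kernel-verified Lean document; each statement's English description precedes it below -/
import Mathlib

section
/- For the N×N square lattice graph with the S-pattern (boustrophedon) vertex enumeration f_S : vertices → {0,...,N²−1}, the edgesum ∑_{(u,v)∈E} |f_S(u) − f_S(v)| equals N³ − N. -/
/-- Edgesum of an enumeration `f` of the `N × N` square lattice: the sum over
edges (between horizontally or vertically adjacent vertices) of `|f u - f v|`. -/
def edgesum (N : ℕ) (f : Fin N × Fin N → ℤ) : ℤ :=
  ∑ p ∈ Finset.univ.filter (fun p : (Fin N × Fin N) × (Fin N × Fin N) =>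
      (p.1.1 = p.2.1 ∧ (p.2.2 : ℕ) = (p.1.2 : ℕ) + 1) ∨
      (p.1.2 = p.2.2 ∧ (p.2.1 : ℕ) = (p.1.1 : ℕ) + 1)),
    |f p.1 - f p.2|

/-- The S-pattern (boustrophedon) enumeration of the `N × N` lattice. -/
def fS (N : ℕ) : Fin N × Fin N → ℤ := fun p =>
  if (p.1 : ℕ) % 2 = 0 then ((p.1 : ℕ) * N + (p.2 : ℕ) : ℕ)
  else ((p.1 : ℕ) * N + (N - 1 - (p.2 : ℕ)) : ℕ)

lemma sum_fin_ite {N : ℕ} (k : ℕ) (g : Fin N → ℤ) :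
    (∑ d : Fin N, if (d : ℕ) = k then g d else 0) =
      if h : k < N then g ⟨k, h⟩ else 0 := by
  split_ifs with h
  · rw [Finset.sum_eq_single (⟨k, h⟩ : Fin N)]
    · simp
    · intro d _ hd; rw [if_neg]; intro hc; exact hd (Fin.ext hc)
    · simp
  · apply Finset.sum_eq_zero; intro d _
    rw [if_neg]; intro hc; exact h (hc ▸ d.isLt)

lemma edgesum_eq (N : ℕ) (f : Fin N × Fin N → ℤ) :
    edgesum N f = ∑ a : Fin N, ∑ b : Fin N,
      ((if h : (b : ℕ) + 1 < N then |f (a, b) - f (a, ⟨(b : ℕ) + 1, h⟩)| else 0) +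
       (if h : (a : ℕ) + 1 < N then |f (a, b) - f (⟨(a : ℕ) + 1, h⟩, b)| else 0)) := by
  unfold edgesum
  rw [Finset.sum_filter (fun p : (Fin N × Fin N) × (Fin N × Fin N) =>
      (p.1.1 = p.2.1 ∧ (p.2.2 : ℕ) = (p.1.2 : ℕ) + 1) ∨
      (p.1.2 = p.2.2 ∧ (p.2.1 : ℕ) = (p.1.1 : ℕ) + 1)) (fun p => |f p.1 - f p.2|)]
  simp only [Fintype.sum_prod_type]
  refine Finset.sum_congr rfl fun a _ => Finset.sum_congr rfl fun b _ => ?_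
  have hsplit : ∀ (c d : Fin N),
      (if ((a = c ∧ (d : ℕ) = (b : ℕ) + 1) ∨ (b = d ∧ (c : ℕ) = (a : ℕ) + 1))
        then |f (a, b) - f (c, d)| else 0) =
      (if (a = c ∧ (d : ℕ) = (b : ℕ) + 1) then |f (a, b) - f (c, d)| else 0) +
      (if (b = d ∧ (c : ℕ) = (a : ℕ) + 1) then |f (a, b) - f (c, d)| else 0) := by
    intro c d
    by_cases hP : (a = c ∧ (d : ℕ) = (b : ℕ) + 1)
    · by_cases hQ : (b = d ∧ (c : ℕ) = (a : ℕ) + 1)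
      · exfalso
        obtain ⟨h1, h2⟩ := hP; obtain ⟨h3, h4⟩ := hQ
        subst h3; omega
      · simp [hP, hQ]
    · simp [hP]
  simp only [hsplit, Finset.sum_add_distrib]
  congr 1
  · rw [Finset.sum_comm]
    simp only [ite_and]
    simp only [Finset.sum_ite_eq, Finset.mem_univ, if_true]
    exact sum_fin_ite _ _
  · simp only [ite_and]
    simp only [Finset.sum_ite_eq, Finset.mem_univ, if_true]
    exact sum_fin_ite _ _

lemma fS_h_step (N : ℕ) (a b : Fin N) (h : (b : ℕ) + 1 < N) :
    |fS N (a, b) - fS N (a, ⟨(b : ℕ) + 1, h⟩)| = 1 := by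
  simp only [fS]
  by_cases hp : (a : ℕ) % 2 = 0
  · simp only [hp, if_pos]
    have : ((a : ℕ) * N + ((b : ℕ) + 1)) = ((a : ℕ) * N + (b : ℕ)) + 1 := by omega
    rw [this]; push_cast; simp [abs_of_nonpos]
  · simp only [hp, if_neg, if_false]
    have : ((a : ℕ) * N + (N - 1 - (b : ℕ))) = ((a : ℕ) * N + (N - 1 - ((b : ℕ) + 1))) + 1 := by
      omega
    rw [this]; push_cast; simp

lemma fS_v_step (N : ℕ) (a b : Fin N) (h : (a : ℕ) + 1 < N) :
    |fS N (a, b) - fS N (⟨(a : ℕ) + 1, h⟩, b)| =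
      if (a : ℕ) % 2 = 0 then 2 * (N : ℤ) - 1 - 2 * (b : ℕ) else 2 * (b : ℕ) + 1 := by
  have hb : (b : ℕ) < N := b.isLt
  have hm : ((a : ℕ) + 1) * N = (a : ℕ) * N + N := by ring
  simp only [fS]
  by_cases hp : (a : ℕ) % 2 = 0
  · have hp1 : ¬ ((a : ℕ) + 1) % 2 = 0 := by omega
    simp only [hp, hp1, if_true, if_false, if_pos]
    rw [abs_sub_comm]
    have key : (((a : ℕ) + 1) * N + (N - 1 - (b : ℕ)) : ℕ) =
        ((a : ℕ) * N + (b : ℕ)) + (2 * N - 1 - 2 * (b : ℕ)) := by omega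
    rw [key]
    rw [show ((((a : ℕ) * N + (b : ℕ)) + (2 * N - 1 - 2 * (b : ℕ)) : ℕ) : ℤ) -
        (((a : ℕ) * N + (b : ℕ) : ℕ) : ℤ) = ((2 * N - 1 - 2 * (b : ℕ) : ℕ) : ℤ) by push_cast; ring]
    rw [abs_of_nonneg (Int.natCast_nonneg _)]
    omega
  · have hp1 : ((a : ℕ) + 1) % 2 = 0 := by omega
    simp only [hp, hp1, if_true, if_false, if_neg]
    rw [abs_sub_comm]
    have key : (((a : ℕ) + 1) * N + (b : ℕ) : ℕ) =
        ((a : ℕ) * N + (N - 1 - (b : ℕ))) + (2 * (b : ℕ) + 1) := by omega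
    rw [key]
    rw [show ((((a : ℕ) * N + (N - 1 - (b : ℕ))) + (2 * (b : ℕ) + 1) : ℕ) : ℤ) -
        (((a : ℕ) * N + (N - 1 - (b : ℕ)) : ℕ) : ℤ) = ((2 * (b : ℕ) + 1 : ℕ) : ℤ) by
      push_cast; ring]
    rw [abs_of_nonneg (Int.natCast_nonneg _)]
    push_cast; ring

lemma sum_fin_cast_two (N : ℕ) : (∑ b : Fin N, ((b : ℕ) : ℤ)) * 2 = N * N - N := by
  rw [Fin.sum_univ_eq_sum_range]
  induction N with
  | zero => simp
  | succ n ih =>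
    rw [Finset.sum_range_succ]
    push_cast
    push_cast at ih
    linear_combination ih

lemma sum_v_even (N : ℕ) : (∑ b : Fin N, (2 * (N : ℤ) - 1 - 2 * (b : ℕ))) = N ^ 2 := by
  have h := sum_fin_cast_two N
  rw [Finset.sum_sub_distrib, Finset.sum_const, Finset.card_univ, Fintype.card_fin,
    ← Finset.mul_sum]
  linear_combination -h

lemma sum_v_odd (N : ℕ) : (∑ b : Fin N, (2 * ((b : ℕ) : ℤ) + 1)) = N ^ 2 := by
  have h := sum_fin_cast_two N
  rw [Finset.sum_add_distrib, Finset.sum_const, Finset.card_univ, Fintype.card_fin,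
    ← Finset.mul_sum]
  linear_combination h

lemma sum_ind (M : ℕ) (c : ℤ) :
    (∑ i : Fin (M + 1), if (i : ℕ) + 1 < M + 1 then c else 0) = M * c := by
  rw [Fin.sum_univ_eq_sum_range (fun n => if n + 1 < M + 1 then c else 0),
    Finset.sum_range_succ]
  rw [if_neg (by omega)]
  rw [Finset.sum_congr rfl (fun i hi => if_pos (by simp at hi; omega))]
  simp [mul_comm]


/-- The edgesum of the S-pattern on the `N × N` square lattice equals `N³ − N`. -/
theorem s_pattern_edgesum (N : ℕ) : edgesum N (fS N) = (N : ℤ) ^ 3 - N := by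
  obtain _ | M := N
  · simp [edgesum]
  · rw [edgesum_eq]
    have hrow : ∀ a : Fin (M + 1), (∑ b : Fin (M + 1),
        ((if h : (b : ℕ) + 1 < M + 1 then
            |fS (M + 1) (a, b) - fS (M + 1) (a, ⟨(b : ℕ) + 1, h⟩)| else 0) +
         (if h : (a : ℕ) + 1 < M + 1 then
            |fS (M + 1) (a, b) - fS (M + 1) (⟨(a : ℕ) + 1, h⟩, b)| else 0)))
        = (M : ℤ) + (if (a : ℕ) + 1 < M + 1 then ((M + 1 : ℕ) : ℤ) ^ 2 else 0) := by
      intro a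
      rw [Finset.sum_add_distrib]
      congr 1
      · rw [Finset.sum_congr rfl (fun b _ => ?_), sum_ind M 1]
        · ring
        · show _ = if (b : ℕ) + 1 < M + 1 then (1 : ℤ) else 0
          by_cases h : (b : ℕ) + 1 < M + 1
          · rw [dif_pos h, if_pos h, fS_h_step]
          · rw [dif_neg h, if_neg h]
      · by_cases h : (a : ℕ) + 1 < M + 1
        · rw [if_pos h]
          simp only [dif_pos h]
          rw [Finset.sum_congr rfl (fun b _ => fS_v_step _ a b h)]
          by_cases hp : (a : ℕ) % 2 = 0
          · simp only [hp, if_true]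
            exact sum_v_even (M + 1)
          · simp only [hp, if_false]
            exact sum_v_odd (M + 1)
        · rw [if_neg h]
          simp only [dif_neg h]
          simp
    rw [Finset.sum_congr rfl (fun a _ => hrow a)]
    rw [Finset.sum_add_distrib, Finset.sum_const, Finset.card_univ, Fintype.card_fin,
      sum_ind M (((M + 1 : ℕ) : ℤ) ^ 2)]
    push_cast
    ring
end

section
/- For the N×N square lattice, the row-major enumeration f_Z achieves bandwidth N, i.e., max_{(u,v)∈E} |f_Z(u) − f_Z(v)| = N, and this is within the minimum possible over all bijective enumerations, i.e., every bijection f : vertices → {0,...,N²−1} satisfies max_{(u,v)∈E} |f(u) − f(v)| ≥ N−1. -/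
/-- The Z-pattern (row-major) enumeration of the `N × N` lattice. -/
def fZ (N : ℕ) : Fin N × Fin N → ℤ := fun p => ((p.1 : ℕ) * N + (p.2 : ℕ) : ℕ)

/-- Adjacency in the `N × N` square lattice (each edge appears once, oriented). -/
def latticeAdj (N : ℕ) (u v : Fin N × Fin N) : Prop :=
  (u.1 = v.1 ∧ (v.2 : ℕ) = (u.2 : ℕ) + 1) ∨ (u.2 = v.2 ∧ (v.1 : ℕ) = (u.1 : ℕ) + 1)

/-- On a path, a property that holds somewhere and fails somewhere must "cross"
at some consecutive pair. -/
lemma path_cross {N : ℕ} (p : Fin N → Prop) (a b : Fin N)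
    (ha : p a) (hb : ¬ p b) :
    ∃ j j' : Fin N, (j' : ℕ) = (j : ℕ) + 1 ∧ ((p j ∧ ¬ p j') ∨ (¬ p j ∧ p j')) := by
  classical
  by_contra h
  push_neg at h
  have pos : 0 < N := a.pos
  have key : ∀ n, ∀ hn : n < N, (p ⟨n, hn⟩ ↔ p ⟨0, pos⟩) := by
    intro n
    induction n with
    | zero => intro hn; exact Iff.rfl
    | succ m ih =>
      intro hn
      have hm : m < N := by omega
      have h1 := h ⟨m, hm⟩ ⟨m + 1, hn⟩ rfl
      have h2 := ih hm
      tauto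
  have ka := key a.1 a.2
  have kb := key b.1 b.2
  simp only [Fin.eta] at ka kb
  tauto

lemma main_aux {N : ℕ} (hN : 2 ≤ N) (f : (Fin N × Fin N) ≃ Fin (N * N))
    (hB : ∀ u v, latticeAdj N u v → |((f u : ℕ) : ℤ) - ((f v : ℕ) : ℤ)| ≤ (N : ℤ) - 2)
    (k : ℕ) (hk1 : 1 ≤ k) (hk : k < N * N)
    (hP : ∀ i : Fin N, ∃ j : Fin N, (f (i, j) : ℕ) ≤ k)
    (hprev : ¬ ((∀ i : Fin N, ∃ j : Fin N, (f (i, j) : ℕ) ≤ k - 1) ∨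
                (∀ j : Fin N, ∃ i : Fin N, (f (i, j) : ℕ) ≤ k - 1))) : False := by
  classical
  set v := f.symm ⟨k, hk⟩ with hv
  -- every row other than the row of v has a vertex outside S_k
  have mixed : ∀ i : Fin N, i ≠ v.1 → ∃ j : Fin N, ¬ ((f (i, j) : ℕ) ≤ k) := by
    intro i hi
    by_contra hall
    push_neg at hall
    apply hprev
    refine Or.inr fun j => ⟨i, ?_⟩
    have h1 := hall j
    have h2 : (f (i, j) : ℕ) ≠ k := by
      intro hk'
      have e1 : f (i, j) = ⟨k, hk⟩ := Fin.ext hk'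
      have e2 : (i, j) = v := by
        rw [hv, ← e1, Equiv.symm_apply_apply]
      exact hi (by rw [← e2])
    omega
  -- each such row gives a boundary vertex with label in (k, k + (N-2)]
  have bdry : ∀ i : Fin N, i ≠ v.1 → ∃ w : Fin N × Fin N,
      w.1 = i ∧ k + 1 ≤ (f w : ℕ) ∧ (f w : ℕ) ≤ k + (N - 2) := by
    intro i hi
    obtain ⟨ja, hja⟩ := hP i
    obtain ⟨jb, hjb⟩ := mixed i hi
    obtain ⟨j, j', hjj, hcross⟩ := path_cross (fun j => (f (i, j) : ℕ) ≤ k) ja jb hja hjb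
    have hadj : latticeAdj N (i, j) (i, j') := Or.inl ⟨rfl, hjj⟩
    have hBij := hB _ _ hadj
    rw [abs_le] at hBij
    obtain ⟨hb1, hb2⟩ := hBij
    rcases hcross with ⟨h1, h2⟩ | ⟨h1, h2⟩
    · exact ⟨(i, j'), rfl, by omega, by omega⟩
    · exact ⟨(i, j), rfl, by omega, by omega⟩
  -- pigeonhole
  have hchoice : ∀ i : Fin N, ∃ w : Fin N × Fin N,
      i ≠ v.1 → (w.1 = i ∧ k + 1 ≤ (f w : ℕ) ∧ (f w : ℕ) ≤ k + (N - 2)) := by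
    intro i
    by_cases hi : i = v.1
    · exact ⟨v, fun h => absurd hi h⟩
    · obtain ⟨w, hw⟩ := bdry i hi
      exact ⟨w, fun _ => hw⟩
  choose w hw using hchoice
  have hcard : (Finset.univ.erase v.1).card ≤ (Finset.Icc (k + 1) (k + (N - 2))).card := by
    apply Finset.card_le_card_of_injOn (fun i => (f (w i) : ℕ))
    · intro i hi
      obtain ⟨_, h1, h2⟩ := hw i (Finset.ne_of_mem_erase hi)
      exact Finset.mem_Icc.mpr ⟨h1, h2⟩
    · intro i hi i' hi' heq
      have hi1 := (hw i (Finset.ne_of_mem_erase hi)).1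
      have hi2 := (hw i' (Finset.ne_of_mem_erase hi')).1
      have e1 : f (w i) = f (w i') := Fin.ext heq
      have e2 : w i = w i' := f.injective e1
      rw [← hi1, ← hi2, e2]
  rw [Finset.card_erase_of_mem (Finset.mem_univ _), Finset.card_univ, Fintype.card_fin,
      Nat.card_Icc] at hcard
  omega

/-- The row-major enumeration achieves bandwidth `N`, and every bijective
enumeration of the `N × N` lattice has bandwidth at least `N − 1`. -/
theorem z_pattern_bandwidth (N : ℕ) (hN : 2 ≤ N) :
    ((∀ u v : Fin N × Fin N, latticeAdj N u v → |fZ N u - fZ N v| ≤ (N : ℤ)) ∧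
     (∃ u v : Fin N × Fin N, latticeAdj N u v ∧ |fZ N u - fZ N v| = (N : ℤ))) ∧
    (∀ f : (Fin N × Fin N) ≃ Fin (N * N),
      ∃ u v : Fin N × Fin N, latticeAdj N u v ∧
        (N : ℤ) - 1 ≤ |((f u : ℕ) : ℤ) - ((f v : ℕ) : ℤ)|) := by
  classical
  refine ⟨⟨?_, ?_⟩, ?_⟩
  · -- upper bound for fZ
    intro u v h
    rcases h with ⟨h1, h2⟩ | ⟨h1, h2⟩
    · have e : fZ N v - fZ N u = 1 := by
        simp only [fZ]
        push_cast
        rw [← h1]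
        -- (values already in ℕ)
        omega
      rw [abs_sub_comm, e]
      exact_mod_cast Nat.one_le_iff_ne_zero.mpr (by omega)
    · have e : fZ N v - fZ N u = (N : ℤ) := by
        simp only [fZ]
        push_cast
        rw [← h1]
        -- (values already in ℕ)
        have := u.2.2
        nlinarith [h2]
      rw [abs_sub_comm, e, abs_of_nonneg (by positivity)]
  · -- fZ achieves N on a vertical edge
    refine ⟨(⟨0, by omega⟩, ⟨0, by omega⟩), (⟨1, by omega⟩, ⟨0, by omega⟩), Or.inr ⟨rfl, rfl⟩, ?_⟩
    simp [fZ, abs_sub_comm]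
  · -- lower bound for arbitrary bijections
    intro f
    by_contra hcon
    push_neg at hcon
    have hB : ∀ u v, latticeAdj N u v →
        |((f u : ℕ) : ℤ) - ((f v : ℕ) : ℤ)| ≤ (N : ℤ) - 2 := by
      intro u v h
      have := hcon u v h
      omega
    have hNN : 4 ≤ N * N := by nlinarith
    have hex : ∃ k, (∀ i : Fin N, ∃ j : Fin N, (f (i, j) : ℕ) ≤ k) ∨
        (∀ j : Fin N, ∃ i : Fin N, (f (i, j) : ℕ) ≤ k) := by
      refine ⟨N * N - 1, Or.inl fun i => ⟨⟨0, by omega⟩, ?_⟩⟩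
      have := (f (i, ⟨0, by omega⟩)).isLt
      omega
    set k := Nat.find hex with hkdef
    have hspec := Nat.find_spec hex
    have hkle : k ≤ N * N - 1 := by
      apply Nat.find_min' hex
      refine Or.inl fun i => ⟨⟨0, by omega⟩, ?_⟩
      have := (f (i, ⟨0, by omega⟩)).isLt
      omega
    have hklt : k < N * N := by omega
    have hP0 : ¬ ((∀ i : Fin N, ∃ j : Fin N, (f (i, j) : ℕ) ≤ 0) ∨
        (∀ j : Fin N, ∃ i : Fin N, (f (i, j) : ℕ) ≤ 0)) := by
      rintro (h | h)
      · obtain ⟨j0, hj0⟩ := h ⟨0, by omega⟩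
        obtain ⟨j1, hj1⟩ := h ⟨1, by omega⟩
        have e : f (⟨0, by omega⟩, j0) = f (⟨1, by omega⟩, j1) :=
          Fin.ext (by omega)
        have := f.injective e
        simp only [Prod.mk.injEq] at this
        have := congrArg Fin.val this.1
        simp at this
      · obtain ⟨j0, hj0⟩ := h ⟨0, by omega⟩
        obtain ⟨j1, hj1⟩ := h ⟨1, by omega⟩
        have e : f (j0, ⟨0, by omega⟩) = f (j1, ⟨1, by omega⟩) :=
          Fin.ext (by omega)
        have := f.injective e
        simp only [Prod.mk.injEq] at this
        have := congrArg Fin.val this.2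
        simp at this
    have hk1 : 1 ≤ k := by
      rcases Nat.eq_zero_or_pos k with h | h
      · exact absurd (h ▸ hspec) hP0
      · exact h
    have hprev := Nat.find_min hex (m := k - 1) (by omega)
    rcases hspec with hrows | hcols
    · exact main_aux hN f hB k hk1 hklt hrows hprev
    · set f' : (Fin N × Fin N) ≃ Fin (N * N) := (Equiv.prodComm (Fin N) (Fin N)).trans f
        with hf'
      have hB' : ∀ u v, latticeAdj N u v →
          |((f' u : ℕ) : ℤ) - ((f' v : ℕ) : ℤ)| ≤ (N : ℤ) - 2 := by
        intro u v h
        exact hB u.swap v.swap (Or.symm h)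
      have hP' : ∀ i : Fin N, ∃ j : Fin N, (f' (i, j) : ℕ) ≤ k := by
        intro i
        obtain ⟨i', h⟩ := hcols i
        exact ⟨i', h⟩
      have hprev' : ¬ ((∀ i : Fin N, ∃ j : Fin N, (f' (i, j) : ℕ) ≤ k - 1) ∨
          (∀ j : Fin N, ∃ i : Fin N, (f' (i, j) : ℕ) ≤ k - 1)) := by
        intro h
        apply hprev
        rcases h with h | h
        · exact Or.inr fun j => h j
        · exact Or.inl fun i => h i
      exact main_aux hN f' hB' k hk1 hklt hP' hprev'
end

section
/- Let G = (V,E) be the N×N square lattice and let f be a bijective enumeration of V into {0,...,N²−1} that is horizontally and vertically ordered (labels strictly increase left-to-right in each row and top-to-bottom in each column). Then the edgesum satisfies C¹(f) = ∑_{α in bottom row} f(α) + ∑_{α in right column} f(α) − ∑_{α in top row} f(α) − ∑_{α in left column} f(α), where the corner vertices are counted in both of their respective row and column sums. -/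
lemma collapse {N : ℕ} (m : ℕ) (x : Fin N → ℤ) :
    ∑ j' : Fin N, (if (j' : ℕ) = m then x j' else 0)
      = if h : m < N then x ⟨m, h⟩ else 0 := by
  split
  · next h =>
    rw [Finset.sum_eq_single (⟨m, h⟩ : Fin N)]
    · simp
    · intro b _ hb
      rw [if_neg]
      simpa [Fin.ext_iff] using hb
    · simp
  · next h =>
    apply Finset.sum_eq_zero
    intro j _
    rw [if_neg]
    omega

lemma tele {N : ℕ} (hN : 0 < N) (a : Fin N → ℤ) :
    (∑ j : Fin N, if h : (j : ℕ) + 1 < N then a ⟨(j : ℕ) + 1, h⟩ - a j else 0)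
      = a ⟨N - 1, Nat.sub_lt hN Nat.one_pos⟩ - a ⟨0, hN⟩ := by
  set b : ℕ → ℤ := fun k => if h : k < N then a ⟨k, h⟩ else 0 with hb
  have h1 : (∑ j : Fin N, if h : (j : ℕ) + 1 < N then a ⟨(j : ℕ) + 1, h⟩ - a j else 0)
      = ∑ j : Fin N, (fun k => if k + 1 < N then b (k + 1) - b k else 0) (j : ℕ) := by
    apply Finset.sum_congr rfl
    intro j _
    have hj : (j : ℕ) < N := j.isLt
    by_cases h : (j : ℕ) + 1 < N
    · simp [hb, h, hj]
    · simp [h]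
  rw [h1, Fin.sum_univ_eq_sum_range (fun k => if k + 1 < N then b (k + 1) - b k else 0) N]
  have hM : Finset.range N = Finset.range ((N - 1) + 1) := by
    congr 1; omega
  rw [hM, Finset.sum_range_succ]
  have h2 : ∀ k ∈ Finset.range (N - 1),
      (fun k => if k + 1 < N then b (k + 1) - b k else 0) k = b (k + 1) - b k := by
    intro k hk
    simp only [Finset.mem_range] at hk
    simp only []
    rw [if_pos (by omega)]
  rw [Finset.sum_congr rfl h2, Finset.sum_range_sub]
  rw [if_neg (by omega : ¬(N - 1 + 1 < N))]
  have hN1 : N - 1 < N := by omega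
  simp only [hb, dif_pos hN1, dif_pos hN]
  omega

/-- For a horizontally and vertically ordered bijective enumeration of the
`N × N` lattice, the edgesum telescopes to a signed sum of boundary labels:
bottom row + right column − top row − left column (corners counted in both
their row and column sums). -/
theorem ordered_edgesum_boundary (N : ℕ) (hN : 0 < N)
    (f : (Fin N × Fin N) ≃ Fin (N * N))
    (hrow : ∀ (i j : Fin N) (h : (j : ℕ) + 1 < N),
      ((f (i, j) : ℕ) : ℤ) < ((f (i, ⟨(j : ℕ) + 1, h⟩) : ℕ) : ℤ))
    (hcol : ∀ (i j : Fin N) (h : (i : ℕ) + 1 < N),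
      ((f (i, j) : ℕ) : ℤ) < ((f (⟨(i : ℕ) + 1, h⟩, j) : ℕ) : ℤ)) :
    edgesum N (fun v => ((f v : ℕ) : ℤ)) =
      (∑ j : Fin N, ((f (⟨N - 1, by omega⟩, j) : ℕ) : ℤ))
      + (∑ i : Fin N, ((f (i, ⟨N - 1, by omega⟩) : ℕ) : ℤ))
      - (∑ j : Fin N, ((f (⟨0, hN⟩, j) : ℕ) : ℤ))
      - (∑ i : Fin N, ((f (i, ⟨0, hN⟩) : ℕ) : ℤ)) := by
  set g : Fin N × Fin N → ℤ := fun v => ((f v : ℕ) : ℤ) with hg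
  have key : edgesum N g =
      (∑ x : Fin N × Fin N, ∑ y : Fin N × Fin N,
        (if x.1 = y.1 ∧ (y.2 : ℕ) = (x.2 : ℕ) + 1 then |g x - g y| else 0))
      + (∑ x : Fin N × Fin N, ∑ y : Fin N × Fin N,
        (if x.2 = y.2 ∧ (y.1 : ℕ) = (x.1 : ℕ) + 1 then |g x - g y| else 0)) := by
    rw [edgesum, Finset.sum_filter, Fintype.sum_prod_type, ← Finset.sum_add_distrib]
    apply Finset.sum_congr rfl
    intro x _
    rw [← Finset.sum_add_distrib]
    apply Finset.sum_congr rfl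
    intro y _
    by_cases hP : x.1 = y.1 ∧ (y.2 : ℕ) = (x.2 : ℕ) + 1
    · have hQ : ¬ (x.2 = y.2 ∧ (y.1 : ℕ) = (x.1 : ℕ) + 1) := by
        rintro ⟨h1, h2⟩
        obtain ⟨h3, h4⟩ := hP
        rw [h3] at h2; omega
      simp [hP, hQ]
    · by_cases hQ : x.2 = y.2 ∧ (y.1 : ℕ) = (x.1 : ℕ) + 1
      · simp [hP, hQ]
      · simp [hP, hQ]
  have hH : ∀ x : Fin N × Fin N,
      (∑ y : Fin N × Fin N,
        (if x.1 = y.1 ∧ (y.2 : ℕ) = (x.2 : ℕ) + 1 then |g x - g y| else 0))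
      = (if h : (x.2 : ℕ) + 1 < N then g (x.1, ⟨(x.2 : ℕ) + 1, h⟩) - g x else 0) := by
    rintro ⟨i, j⟩
    rw [Fintype.sum_prod_type]
    rw [Finset.sum_eq_single i]
    · have : (∑ j' : Fin N,
          (if i = i ∧ (j' : ℕ) = (j : ℕ) + 1 then |g (i, j) - g (i, j')| else 0))
          = ∑ j' : Fin N, (if (j' : ℕ) = (j : ℕ) + 1 then |g (i, j) - g (i, j')| else 0) := by
        apply Finset.sum_congr rfl; intro j' _; simp
      rw [this, collapse]
      split
      · next h =>
        rw [abs_of_nonpos (by have := hrow i j h; simp only [hg]; omega)]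
        ring
      · rfl
    · intro b _ hb
      apply Finset.sum_eq_zero
      intro j' _
      rw [if_neg]
      rintro ⟨h1, _⟩; exact hb h1.symm
    · simp
  have hV : ∀ x : Fin N × Fin N,
      (∑ y : Fin N × Fin N,
        (if x.2 = y.2 ∧ (y.1 : ℕ) = (x.1 : ℕ) + 1 then |g x - g y| else 0))
      = (if h : (x.1 : ℕ) + 1 < N then g (⟨(x.1 : ℕ) + 1, h⟩, x.2) - g x else 0) := by
    rintro ⟨i, j⟩
    rw [Fintype.sum_prod_type]
    have step : ∀ i' : Fin N,
        (∑ j' : Fin N,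
          (if j = j' ∧ (i' : ℕ) = (i : ℕ) + 1 then |g (i, j) - g (i', j')| else 0))
        = (if (i' : ℕ) = (i : ℕ) + 1 then |g (i, j) - g (i', j)| else 0) := by
      intro i'
      rw [Finset.sum_eq_single j]
      · simp
      · intro b _ hb
        rw [if_neg]
        rintro ⟨h1, _⟩; exact hb h1.symm
      · simp
    rw [Finset.sum_congr rfl (fun i' _ => step i'), collapse]
    split
    · next h =>
      rw [abs_of_nonpos (by have := hcol i j h; simp only [hg]; omega)]
      ring
    · rfl
  have E1 : (∑ x : Fin N × Fin N,
      (if h : (x.2 : ℕ) + 1 < N then g (x.1, ⟨(x.2 : ℕ) + 1, h⟩) - g x else 0))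
      = (∑ i : Fin N, g (i, ⟨N - 1, by omega⟩)) - (∑ i : Fin N, g (i, ⟨0, hN⟩)) := by
    rw [Fintype.sum_prod_type, ← Finset.sum_sub_distrib]
    apply Finset.sum_congr rfl
    intro i _
    exact tele hN (fun j => g (i, j))
  have E2 : (∑ x : Fin N × Fin N,
      (if h : (x.1 : ℕ) + 1 < N then g (⟨(x.1 : ℕ) + 1, h⟩, x.2) - g x else 0))
      = (∑ j : Fin N, g (⟨N - 1, by omega⟩, j)) - (∑ j : Fin N, g (⟨0, hN⟩, j)) := by
    rw [Fintype.sum_prod_type, Finset.sum_comm, ← Finset.sum_sub_distrib]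
    apply Finset.sum_congr rfl
    intro j _
    exact tele hN (fun i => g (i, j))
  rw [key, Finset.sum_congr rfl (fun x _ => hH x), Finset.sum_congr rfl (fun x _ => hV x),
    E1, E2]
  simp only [hg]
  ring
end

section
/- The function C(x) = N³ − xN² + 2x²N − (2/3)x³ + N² − xN − 2N + (2/3)x, regarded as a function of a real variable x on [0, N/2], attains its minimum at x = N − (1/2)√(2N² − 2N + 4/3) for N ≥ 5. -/
/-- The edgesum of the Mitchison–Durbin-type enumeration pattern on the `N × N`
lattice, as a function of the square-corner parameter `x`. -/
noncomputable def MDcost (N x : ℝ) : ℝ :=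
  N ^ 3 - x * N ^ 2 + 2 * x ^ 2 * N - (2 / 3) * x ^ 3 + N ^ 2 - x * N - 2 * N + (2 / 3) * x

/-- For `N ≥ 5`, the cost `MDcost N x` on `[0, N/2]` attains its minimum at
`x = N − (1/2)√(2N² − 2N + 4/3)`. -/
theorem md_cost_min (N : ℝ) (hN : 5 ≤ N) :
    (N - (1 / 2) * Real.sqrt (2 * N ^ 2 - 2 * N + 4 / 3)) ∈ Set.Icc 0 (N / 2) ∧
    ∀ x ∈ Set.Icc 0 (N / 2),
      MDcost N (N - (1 / 2) * Real.sqrt (2 * N ^ 2 - 2 * N + 4 / 3)) ≤ MDcost N x := by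
  set s := Real.sqrt (2 * N ^ 2 - 2 * N + 4 / 3) with hs
  have hA : (0:ℝ) ≤ 2 * N ^ 2 - 2 * N + 4 / 3 := by nlinarith
  have hs0 : 0 ≤ s := Real.sqrt_nonneg _
  have hs2 : s ^ 2 = 2 * N ^ 2 - 2 * N + 4 / 3 := Real.sq_sqrt hA
  have hsN : N ≤ s := by
    nlinarith [hs2, hs0]
  have hs2N : s ≤ 2 * N := by
    nlinarith [hs2, hs0]
  constructor
  · constructor
    · nlinarith
    · nlinarith
  · intro x hx
    obtain ⟨hx0, hx2⟩ := hx
    have key : MDcost N x - MDcost N (N - (1/2) * s) =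
        (2/3) * (x - (N - (1/2) * s)) ^ 2 * (N + s - x) := by
      unfold MDcost
      linear_combination (-(1/4) * s - (1/2) * (x - N)) * hs2
    nlinarith [sq_nonneg (x - (N - (1/2) * s)), key,
      mul_nonneg (sq_nonneg (x - (N - (1/2) * s))) (by nlinarith : (0:ℝ) ≤ N + s - x)]
end

section
/- As N → ∞, the ratio of the minimum edgesum of the Mitchison–Durbin pattern to the edgesum N³ − N of the S-pattern on the N×N square lattice tends to (4 − √2)/3 ≈ 0.862. Precisely, with x = N − (1/2)√(2N² − 2N + 4/3) substituted into C(x) = N³ − xN² + 2x²N − (2/3)x³ + N² − xN − 2N + (2/3)x, one has lim_{N→∞} C(x(N)) / (N³ − N) = (4 − √2)/3. -/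
noncomputable def MDg (u : ℝ) : ℝ :=
  (1 - (1 - (1/2) * Real.sqrt (2 - 2*u + (4/3)*u^2))
    + 2 * (1 - (1/2) * Real.sqrt (2 - 2*u + (4/3)*u^2))^2
    - (2/3) * (1 - (1/2) * Real.sqrt (2 - 2*u + (4/3)*u^2))^3
    + u * (1 - (1 - (1/2) * Real.sqrt (2 - 2*u + (4/3)*u^2)))
    + u^2 * (-2 + (2/3) * (1 - (1/2) * Real.sqrt (2 - 2*u + (4/3)*u^2)))) / (1 - u^2)

lemma MDg_cont : ContinuousAt MDg 0 := by
  apply ContinuousAt.div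
  · fun_prop
  · fun_prop
  · norm_num

lemma MDg_zero : MDg 0 = (4 - Real.sqrt 2) / 3 := by
  have hs : Real.sqrt 2 ^ 2 = 2 := Real.sq_sqrt (by norm_num)
  unfold MDg
  norm_num
  nlinarith [hs, Real.sqrt_nonneg 2]

/-- As `N → ∞`, the ratio of the minimum Mitchison–Durbin edgesum to the
S-pattern edgesum `N³ − N` tends to `(4 − √2)/3`. -/
theorem md_ratio_limit :
    Filter.Tendsto (fun N : ℝ =>
      MDcost N (N - (1 / 2) * Real.sqrt (2 * N ^ 2 - 2 * N + 4 / 3)) / (N ^ 3 - N))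
      Filter.atTop (nhds ((4 - Real.sqrt 2) / 3)) := by
  have h0 : Filter.Tendsto (fun N : ℝ => 1 / N) Filter.atTop (nhds 0) :=
    by simpa [one_div] using tendsto_inv_atTop_zero
  have h1 : Filter.Tendsto (fun N : ℝ => MDg (1 / N)) Filter.atTop (nhds ((4 - Real.sqrt 2) / 3)) := by
    rw [← MDg_zero]
    exact (MDg_cont.tendsto.comp h0)
  refine h1.congr' ?_
  filter_upwards [Filter.eventually_ge_atTop (2:ℝ)] with N hN
  have hNpos : (0:ℝ) < N := by linarith
  have hN0 : N ≠ 0 := ne_of_gt hNpos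
  have key : (2:ℝ) - 2*(1/N) + (4/3)*(1/N)^2 = (2 * N ^ 2 - 2 * N + 4 / 3) / N^2 := by
    field_simp
  have hsq : Real.sqrt (2 - 2*(1/N) + (4/3)*(1/N)^2) = Real.sqrt (2 * N ^ 2 - 2 * N + 4 / 3) / N := by
    rw [key, Real.sqrt_div (by nlinarith), Real.sqrt_sq hNpos.le]
  have hden : N ^ 3 - N ≠ 0 := by nlinarith
  have hden2 : 1 - (1/N)^2 ≠ 0 := by
    have : (1/N)^2 < 1 := by
      rw [div_pow, div_lt_one (by positivity)]
      nlinarith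
    linarith
  unfold MDg MDcost
  rw [hsq]
  generalize Real.sqrt (2 * N ^ 2 - 2 * N + 4 / 3) = S
  rw [div_eq_div_iff hden2 hden]
  field_simp
  ring
end

section
/- Let f be a horizontally ordered enumeration of the N×N square lattice and let f_hv be obtained from f_h by sorting the labels within each column into increasing top-to-bottom order (i.e., within each column the multiset of labels is preserved but rearranged in increasing order). Then f_hv is also horizontally ordered. -/
/-- Sorting the labels within each column (preserving each column's multiset of
labels but rearranging it into increasing top-to-bottom order) preserves the
property of being horizontally ordered. -/
theorem column_sort_preserves_horizontal (N : ℕ) (f g : Fin N × Fin N → ℤ)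
    (hfinj : Function.Injective f)
    (hfrow : ∀ i : Fin N, StrictMono fun j => f (i, j))
    (hperm : ∀ j : Fin N, ∃ σ : Equiv.Perm (Fin N), ∀ i, g (i, j) = f (σ i, j))
    (hgcol : ∀ j : Fin N, StrictMono fun i => g (i, j)) :
    ∀ i : Fin N, StrictMono fun j => g (i, j) := by
  intro i j j' hjj'
  simp only
  by_contra hcon
  push_neg at hcon
  obtain ⟨σ, hσ⟩ := hperm j
  obtain ⟨τ, hτ⟩ := hperm j'
  have key : ∀ r : Fin N, r ≤ i → (σ.symm (τ r)) < i := by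
    intro r hr
    have h1 : f (τ r, j) < f (τ r, j') := hfrow (τ r) hjj'
    have h2 : f (τ r, j') = g (r, j') := (hτ r).symm
    have h3 : g (r, j') ≤ g (i, j') := (hgcol j').monotone hr
    have h4 : g (σ.symm (τ r), j) = f (τ r, j) := by
      rw [hσ]; simp
    have h5 : g (σ.symm (τ r), j) < g (i, j) := by
      rw [h4]
      calc f (τ r, j) < f (τ r, j') := h1
        _ = g (r, j') := h2
        _ ≤ g (i, j') := h3
        _ ≤ g (i, j) := hcon
    exact (hgcol j).lt_iff_lt.mp h5
  have hcard : (Finset.Iic i).card ≤ (Finset.Iio i).card := by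
    apply Finset.card_le_card_of_injOn (fun r => σ.symm (τ r))
    · intro r hr
      simp only [Finset.coe_Iio, Set.mem_Iio, Finset.mem_coe, Finset.mem_Iio]
      exact key r (Finset.mem_Iic.mp hr)
    · intro a _ b _ h
      exact τ.injective (σ.symm.injective h)
  rw [Fin.card_Iic, Fin.card_Iio] at hcard
  omega
end

section
/- For every bijective enumeration f of the vertices of the N×N square lattice into {0,...,N²−1}, there exists a horizontally and vertically ordered bijective enumeration g with edgesum C¹(g) ≤ C¹(f). -/
open Finset

/-! ### Auxiliary lemmas -/

section Aux

lemma key4 (x y u v : ℤ) (hxy : y ≤ x) (huv : u ≤ v) :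
    |y - u| + |x - v| ≤ |x - u| + |y - v| := by
  rcases abs_cases (y - u) with ⟨h1, _⟩ | ⟨h1, _⟩ <;>
  rcases abs_cases (x - v) with ⟨h2, _⟩ | ⟨h2, _⟩ <;>
  rcases abs_cases (x - u) with ⟨h3, _⟩ | ⟨h3, _⟩ <;>
  rcases abs_cases (y - v) with ⟨h4, _⟩ | ⟨h4, _⟩ <;>
  omega

/-- Rearrangement inequality for sums of absolute differences: the aligned
(sorted-sorted) pairing minimises the sum. -/
lemma rearr : ∀ (n : ℕ) (a b : Fin n → ℤ), Monotone a → Monotone b →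
    ∀ σ : Equiv.Perm (Fin n), ∑ i, |a i - b i| ≤ ∑ i, |a (σ i) - b i| := by
  intro n
  induction n with
  | zero => intro a b _ _ σ; simp
  | succ n ih =>
    intro a b ha hb σ
    set m : Fin (n+1) := σ⁻¹ 0 with hm
    set σ' : Equiv.Perm (Fin (n+1)) := σ * Equiv.swap 0 m with hσ'
    have hσ'0 : σ' 0 = 0 := by
      simp [hσ', Equiv.swap_apply_left, hm]
    have step1 : ∑ i, |a (σ' i) - b i| ≤ ∑ i, |a (σ i) - b i| := by
      rcases eq_or_ne m 0 with hm0 | hm0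
      · have : σ' = σ := by rw [hσ', hm0, Equiv.swap_self]; rfl
        rw [this]
      · have hmem0 : (0 : Fin (n+1)) ∈ (univ : Finset (Fin (n+1))) := mem_univ _
        have hmemm : m ∈ (univ : Finset (Fin (n+1))).erase 0 :=
          Finset.mem_erase.mpr ⟨hm0, mem_univ _⟩
        have split : ∀ F : Fin (n+1) → ℤ,
            ∑ i, F i = F 0 + (F m + ∑ i ∈ (univ.erase 0).erase m, F i) := by
          intro F
          rw [Finset.add_sum_erase _ _ hmemm, Finset.add_sum_erase _ _ hmem0]
        rw [split (fun i => |a (σ' i) - b i|), split (fun i => |a (σ i) - b i|)]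
        have hrest : ∑ i ∈ (univ.erase 0).erase m, |a (σ' i) - b i|
            = ∑ i ∈ (univ.erase 0).erase m, |a (σ i) - b i| := by
          apply Finset.sum_congr rfl
          intro i hi
          have h1 : i ≠ m := (Finset.mem_erase.mp hi).1
          have h2 : i ≠ 0 := (Finset.mem_erase.mp (Finset.mem_erase.mp hi).2).1
          have : σ' i = σ i := by
            simp [hσ', Equiv.swap_apply_of_ne_of_ne h2 h1]
          rw [this]
        rw [hrest]
        have e1 : σ' m = σ 0 := by simp [hσ', Equiv.swap_apply_right]
        have e2 : a (σ' 0) = a 0 := by rw [hσ'0]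
        have e3 : a (σ m) = a 0 := by simp [hm]
        rw [e1, e2, e3, ← add_assoc, ← add_assoc]
        have hkey : |a 0 - b 0| + |a (σ 0) - b m| ≤ |a (σ 0) - b 0| + |a 0 - b m| :=
          key4 (a (σ 0)) (a 0) (b 0) (b m) (ha (Fin.zero_le _)) (hb (Fin.zero_le _))
        exact add_le_add_left hkey _
    refine le_trans ?_ step1
    have hne : ∀ i : Fin n, σ' i.succ ≠ 0 := by
      intro i h
      exact (Fin.succ_ne_zero i) (σ'.injective (h.trans hσ'0.symm))
    have hne' : ∀ i : Fin n, σ'⁻¹ i.succ ≠ 0 := by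
      intro i h
      have : i.succ = σ' 0 := by rw [← h]; simp
      exact (Fin.succ_ne_zero i) (this.trans hσ'0)
    set τ : Equiv.Perm (Fin n) :=
      { toFun := fun i => (σ' i.succ).pred (hne i)
        invFun := fun i => (σ'⁻¹ i.succ).pred (hne' i)
        left_inv := by intro i; simp [Fin.succ_pred]
        right_inv := by intro i; simp [Fin.succ_pred] } with hτ
    have hτs : ∀ i : Fin n, σ' i.succ = (τ i).succ := by
      intro i; simp [hτ, Fin.succ_pred]
    rw [Fin.sum_univ_succ (fun i => |a (σ' i) - b i|),
        Fin.sum_univ_succ (fun i => |a i - b i|), hσ'0]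
    have hmono_a : Monotone (a ∘ Fin.succ) := ha.comp (Fin.strictMono_succ).monotone
    have hmono_b : Monotone (b ∘ Fin.succ) := hb.comp (Fin.strictMono_succ).monotone
    have := ih (a ∘ Fin.succ) (b ∘ Fin.succ) hmono_a hmono_b τ
    simp only [Function.comp] at this
    refine add_le_add_right ?_ _
    calc ∑ i : Fin n, |a i.succ - b i.succ| ≤ ∑ i : Fin n, |a (τ i).succ - b i.succ| := this
      _ = ∑ i : Fin n, |a (σ' i.succ) - b i.succ| := by
          apply Finset.sum_congr rfl; intro i _; rw [hτs]

/-- Sorting two tuples independently does not increase the sum of absolute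
differences of matching entries. -/
lemma sorted_pair_le {n : ℕ} (c d c' d' : Fin n → ℤ) (σ τ : Equiv.Perm (Fin n))
    (h1 : ∀ j, c' j = c (σ j)) (h2 : ∀ j, d' j = d (τ j))
    (hc' : Monotone c') (hd' : Monotone d') :
    ∑ i, |c' i - d' i| ≤ ∑ i, |c i - d i| := by
  have key := rearr n c' d' hc' hd' (τ.trans σ⁻¹)
  calc ∑ i, |c' i - d' i| ≤ ∑ i, |c' ((τ.trans σ⁻¹) i) - d' i| := key
    _ = ∑ i, |c (τ i) - d (τ i)| := by
        apply Finset.sum_congr rfl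
        intro i _
        rw [h1, h2]
        simp
    _ = ∑ i, |c i - d i| := Equiv.sum_comp τ (fun i => |c i - d i|)

lemma card_filter_comp_perm {n : ℕ} (v : Fin n → ℤ) (τ : Equiv.Perm (Fin n)) (c : ℤ) :
    #(univ.filter (fun k => v (τ k) < c)) = #(univ.filter (fun k => v k < c)) := by
  apply Finset.card_bij (fun k _ => τ k)
  · intro k hk
    simp only [mem_filter, mem_univ, true_and] at hk ⊢
    exact hk
  · intro a _ b _ h
    exact τ.injective h
  · intro b hb
    simp only [mem_filter, mem_univ, true_and] at hb ⊢
    exact ⟨τ⁻¹ b, by simpa using hb, by simp⟩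

/-- Order statistics are monotone with respect to pointwise domination. -/
lemma sorted_le_sorted {n : ℕ} (u v su sv : Fin n → ℤ) (σ τ : Equiv.Perm (Fin n))
    (hsu : ∀ k, su k = u (σ k)) (hsv : ∀ k, sv k = v (τ k))
    (hmu : Monotone su) (hmv : Monotone sv) (huv : ∀ k, u k ≤ v k) :
    ∀ i, su i ≤ sv i := by
  intro i
  by_contra hlt
  push_neg at hlt
  set c : ℤ := su i with hc
  have h1 : #(univ.filter (fun k => u k < c)) ≤ (i : ℕ) := by
    rw [← card_filter_comp_perm u σ c]
    have hsub : univ.filter (fun k => u (σ k) < c) ⊆ Finset.Iio i := by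
      intro k hk
      simp only [mem_filter, mem_univ, true_and] at hk
      rw [← hsu] at hk
      rw [Finset.mem_Iio]
      by_contra hik
      push_neg at hik
      exact absurd (hmu hik) (by omega)
    calc #(univ.filter (fun k => u (σ k) < c)) ≤ #(Finset.Iio i) := Finset.card_le_card hsub
      _ = (i : ℕ) := Fin.card_Iio i
  have h2 : (i : ℕ) + 1 ≤ #(univ.filter (fun k => v k < c)) := by
    rw [← card_filter_comp_perm v τ c]
    have hsub : Finset.Iic i ⊆ univ.filter (fun k => v (τ k) < c) := by
      intro k hk
      rw [Finset.mem_Iic] at hk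
      simp only [mem_filter, mem_univ, true_and]
      rw [← hsv]
      exact lt_of_le_of_lt (hmv hk) hlt
    calc (i : ℕ) + 1 = #(Finset.Iic i) := (Fin.card_Iic i).symm
      _ ≤ _ := Finset.card_le_card hsub
  have h3 : (univ.filter (fun k => v k < c)) ⊆ (univ.filter (fun k => u k < c)) := by
    intro k hk
    simp only [mem_filter, mem_univ, true_and] at hk ⊢
    exact lt_of_le_of_lt (huv k) hk
  have := Finset.card_le_card h3
  omega

/-- extend a `Fin n` tuple to `ℕ` by zero -/
def extz (n : ℕ) (c : Fin n → ℤ) : ℕ → ℤ := fun j => if h : j < n then c ⟨j, h⟩ else 0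

/-- sum of absolute differences of consecutive entries -/
def adjSum (n : ℕ) (c : Fin n → ℤ) : ℤ :=
  ∑ j ∈ Finset.range (n - 1), |extz n c (j + 1) - extz n c j|

lemma path_le (n : ℕ) (c : Fin n → ℤ) (a b : ℕ) (hab : a ≤ b) (hb : b ≤ n - 1) :
    |extz n c b - extz n c a| ≤ adjSum n c := by
  have h1 : extz n c b - extz n c a = ∑ j ∈ Finset.Ico a b, (extz n c (j+1) - extz n c j) := by
    rw [Finset.sum_Ico_eq_sub _ hab]
    rw [Finset.sum_range_sub (extz n c), Finset.sum_range_sub (extz n c)]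
    ring
  rw [h1]
  calc |∑ j ∈ Finset.Ico a b, (extz n c (j+1) - extz n c j)|
      ≤ ∑ j ∈ Finset.Ico a b, |extz n c (j+1) - extz n c j| := Finset.abs_sum_le_sum_abs _ _
    _ ≤ adjSum n c := by
        apply Finset.sum_le_sum_of_subset_of_nonneg
        · intro x hx
          rw [Finset.mem_Ico] at hx
          rw [Finset.mem_range]
          omega
        · intro _ _ _; exact abs_nonneg _

lemma adjSum_mono_eq (n : ℕ) (c : Fin n → ℤ) (hm : Monotone c) :
    adjSum n c = extz n c (n - 1) - extz n c 0 := by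
  have : ∀ j ∈ Finset.range (n - 1), |extz n c (j+1) - extz n c j|
      = extz n c (j+1) - extz n c j := by
    intro j hj
    rw [Finset.mem_range] at hj
    have h1 : j + 1 < n := by omega
    have h2 : j < n := by omega
    rw [abs_of_nonneg]
    rw [extz, extz, dif_pos h1, dif_pos h2, sub_nonneg]
    exact hm (by simp [Fin.le_def])
  rw [adjSum, Finset.sum_congr rfl this, Finset.sum_range_sub (extz n c)]

/-- sorting a tuple does not increase the adjacent-difference sum -/
lemma adjSum_sorted_le (n : ℕ) (c c' : Fin n → ℤ) (σ : Equiv.Perm (Fin n))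
    (h : ∀ j, c' j = c (σ j)) (hm : Monotone c') : adjSum n c' ≤ adjSum n c := by
  rcases Nat.eq_zero_or_pos n with h0 | h0
  · subst h0; simp [adjSum]
  have hlast : n - 1 < n := by omega
  rw [adjSum_mono_eq n c' hm]
  rw [extz, extz, dif_pos hlast, dif_pos h0]
  rw [h, h]
  set p : Fin n := σ ⟨n-1, hlast⟩
  set q : Fin n := σ ⟨0, h0⟩
  have hp : (p : ℕ) ≤ n - 1 := by omega
  have hq : (q : ℕ) ≤ n - 1 := by omega
  have hep : c p = extz n c p := by rw [extz, dif_pos p.isLt]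
  have heq : c q = extz n c q := by rw [extz, dif_pos q.isLt]
  rcases le_total (p : ℕ) (q : ℕ) with hpq | hpq
  · have := path_le n c p q hpq hq
    rw [← hep, ← heq] at this
    have h2 : c p - c q ≤ |c q - c p| := by
      rw [abs_sub_comm]; exact le_abs_self _
    linarith
  · have := path_le n c q p hpq hp
    rw [← hep, ← heq] at this
    have h2 : c p - c q ≤ |c p - c q| := le_abs_self _
    linarith

/-- monotonicity from adjacent comparisons -/
lemma mono_of_adj {n : ℕ} (c : Fin n → ℤ)
    (h : ∀ (k : ℕ) (hk : k + 1 < n), c ⟨k, Nat.lt_of_succ_lt hk⟩ ≤ c ⟨k+1, hk⟩) :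
    Monotone c := by
  have key : ∀ (d : ℕ) (a : Fin n) (hd : (a : ℕ) + d < n), c a ≤ c ⟨(a : ℕ) + d, hd⟩ := by
    intro d
    induction d with
    | zero => intro a hd; simp
    | succ d ihd =>
      intro a hd
      have hd' : (a : ℕ) + d < n := by omega
      have h1 := ihd a hd'
      have h2 := h ((a : ℕ) + d) (by omega)
      exact le_trans h1 h2
  intro a b hab
  have hab' : (a : ℕ) ≤ (b : ℕ) := hab
  obtain ⟨d, hd⟩ := Nat.le.dest hab'
  have hb : (a : ℕ) + d < n := by rw [hd]; exact b.isLt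
  have : b = ⟨(a : ℕ) + d, hb⟩ := by
    apply Fin.ext; simp [hd]
  rw [this]
  exact key d a hb

end Aux

def hterm (N : ℕ) (F : Fin N × Fin N → ℤ) (p : Fin N × Fin N) : ℤ :=
  if h : (p.2 : ℕ) + 1 < N then |F p - F (p.1, ⟨(p.2 : ℕ) + 1, h⟩)| else 0

def vterm (N : ℕ) (F : Fin N × Fin N → ℤ) (p : Fin N × Fin N) : ℤ :=
  if h : (p.1 : ℕ) + 1 < N then |F p - F (⟨(p.1 : ℕ) + 1, h⟩, p.2)| else 0

def Hsum (N : ℕ) (F : Fin N × Fin N → ℤ) : ℤ := ∑ i : Fin N, adjSum N (fun j => F (i, j))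

def Vsum (N : ℕ) (F : Fin N × Fin N → ℤ) : ℤ := ∑ j : Fin N, adjSum N (fun i => F (i, j))

lemma edgesum_decomp (N : ℕ) (F : Fin N × Fin N → ℤ) :
    edgesum N F = ∑ p : Fin N × Fin N, hterm N F p + ∑ p : Fin N × Fin N, vterm N F p := by
  rw [edgesum, Finset.sum_filter, ← Finset.sum_add_distrib]
  rw [Fintype.sum_prod_type]
  apply Finset.sum_congr rfl
  intro p1 _
  have split : ∀ p2 : Fin N × Fin N,
      (if (p1.1 = p2.1 ∧ (p2.2 : ℕ) = (p1.2 : ℕ) + 1) ∨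
          (p1.2 = p2.2 ∧ (p2.1 : ℕ) = (p1.1 : ℕ) + 1) then |F p1 - F p2| else 0)
      = (if (p1.1 = p2.1 ∧ (p2.2 : ℕ) = (p1.2 : ℕ) + 1) then |F p1 - F p2| else 0)
      + (if (p1.2 = p2.2 ∧ (p2.1 : ℕ) = (p1.1 : ℕ) + 1) then |F p1 - F p2| else 0) := by
    intro p2
    by_cases h1 : p1.1 = p2.1 ∧ (p2.2 : ℕ) = (p1.2 : ℕ) + 1
    · by_cases h2 : p1.2 = p2.2 ∧ (p2.1 : ℕ) = (p1.1 : ℕ) + 1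
      · exfalso
        have := h1.2
        rw [← h2.1] at this
        omega
      · simp [h1, h2]
    · by_cases h2 : p1.2 = p2.2 ∧ (p2.1 : ℕ) = (p1.1 : ℕ) + 1
      · simp [h1, h2]
      · simp [h1, h2]
  rw [Finset.sum_congr rfl (fun p2 _ => split p2), Finset.sum_add_distrib]
  congr 1
  · -- horizontal part
    by_cases hN : (p1.2 : ℕ) + 1 < N
    · have hiff : ∀ p2 : Fin N × Fin N,
          (p1.1 = p2.1 ∧ (p2.2 : ℕ) = (p1.2 : ℕ) + 1) ↔ p2 = (p1.1, ⟨(p1.2 : ℕ) + 1, hN⟩) := by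
        intro p2
        constructor
        · rintro ⟨h1, h2⟩
          apply Prod.ext
          · exact h1.symm
          · exact Fin.ext h2
        · rintro rfl
          exact ⟨rfl, rfl⟩
      calc ∑ p2 : Fin N × Fin N,
            (if (p1.1 = p2.1 ∧ (p2.2 : ℕ) = (p1.2 : ℕ) + 1) then |F p1 - F p2| else 0)
          = ∑ p2 : Fin N × Fin N,
            (if p2 = (p1.1, ⟨(p1.2 : ℕ) + 1, hN⟩) then |F p1 - F p2| else 0) := by
            apply Finset.sum_congr rfl
            intro p2 _
            rw [if_congr (hiff p2) rfl rfl]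
        _ = |F p1 - F (p1.1, ⟨(p1.2 : ℕ) + 1, hN⟩)| := by
            rw [Finset.sum_ite_eq' univ _ (fun p2 => |F p1 - F p2|)]
            simp
        _ = hterm N F p1 := by rw [hterm, dif_pos hN]
    · have : ∀ p2 : Fin N × Fin N,
          ¬(p1.1 = p2.1 ∧ (p2.2 : ℕ) = (p1.2 : ℕ) + 1) := by
        rintro p2 ⟨_, h2⟩
        have := p2.2.isLt
        omega
      rw [Finset.sum_congr rfl (fun p2 _ => if_neg (this p2))]
      rw [hterm, dif_neg hN]
      simp
  · -- vertical part
    by_cases hN : (p1.1 : ℕ) + 1 < N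
    · have hiff : ∀ p2 : Fin N × Fin N,
          (p1.2 = p2.2 ∧ (p2.1 : ℕ) = (p1.1 : ℕ) + 1) ↔ p2 = (⟨(p1.1 : ℕ) + 1, hN⟩, p1.2) := by
        intro p2
        constructor
        · rintro ⟨h1, h2⟩
          apply Prod.ext
          · exact Fin.ext h2
          · exact h1.symm
        · rintro rfl
          exact ⟨rfl, rfl⟩
      calc ∑ p2 : Fin N × Fin N,
            (if (p1.2 = p2.2 ∧ (p2.1 : ℕ) = (p1.1 : ℕ) + 1) then |F p1 - F p2| else 0)
          = ∑ p2 : Fin N × Fin N,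
            (if p2 = (⟨(p1.1 : ℕ) + 1, hN⟩, p1.2) then |F p1 - F p2| else 0) := by
            apply Finset.sum_congr rfl
            intro p2 _
            rw [if_congr (hiff p2) rfl rfl]
        _ = |F p1 - F (⟨(p1.1 : ℕ) + 1, hN⟩, p1.2)| := by
            rw [Finset.sum_ite_eq' univ _ (fun p2 => |F p1 - F p2|)]
            simp
        _ = vterm N F p1 := by rw [vterm, dif_pos hN]
    · have : ∀ p2 : Fin N × Fin N,
          ¬(p1.2 = p2.2 ∧ (p2.1 : ℕ) = (p1.1 : ℕ) + 1) := by
        rintro p2 ⟨_, h2⟩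
        have := p2.1.isLt
        omega
      rw [Finset.sum_congr rfl (fun p2 _ => if_neg (this p2))]
      rw [vterm, dif_neg hN]
      simp


lemma row_hterm (N : ℕ) (F : Fin N × Fin N → ℤ) (i : Fin N) :
    ∑ j : Fin N, hterm N F (i, j) = adjSum N (fun j => F (i, j)) := by
  set G : ℕ → ℤ := fun k =>
    if h : k + 1 < N then |F (i, ⟨k, Nat.lt_of_succ_lt h⟩) - F (i, ⟨k+1, h⟩)| else 0 with hG
  have e1 : ∑ j : Fin N, hterm N F (i, j) = ∑ k ∈ Finset.range N, G k := by
    rw [Finset.sum_range fun k => G k]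
    apply Finset.sum_congr rfl
    intro j _
    rfl
  rw [e1]
  have e2 : ∑ k ∈ Finset.range N, G k = ∑ k ∈ Finset.range (N - 1), G k := by
    symm
    apply Finset.sum_subset (Finset.range_subset_range.2 (Nat.sub_le N 1))
    intro k hk hk'
    rw [Finset.mem_range] at hk
    rw [Finset.mem_range] at hk'
    rw [hG]
    have : ¬ (k + 1 < N) := by omega
    simp [this]
  rw [e2, adjSum]
  apply Finset.sum_congr rfl
  intro k hk
  rw [Finset.mem_range] at hk
  have h1 : k + 1 < N := by omega
  have h2 : k < N := by omega
  rw [hG]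
  simp only [dif_pos h1]
  rw [extz, extz, dif_pos h1, dif_pos h2, abs_sub_comm]

lemma col_vterm (N : ℕ) (F : Fin N × Fin N → ℤ) (j : Fin N) :
    ∑ i : Fin N, vterm N F (i, j) = adjSum N (fun i => F (i, j)) := by
  set G : ℕ → ℤ := fun k =>
    if h : k + 1 < N then |F (⟨k, Nat.lt_of_succ_lt h⟩, j) - F (⟨k+1, h⟩, j)| else 0 with hG
  have e1 : ∑ i : Fin N, vterm N F (i, j) = ∑ k ∈ Finset.range N, G k := by
    rw [Finset.sum_range fun k => G k]
    apply Finset.sum_congr rfl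
    intro i _
    rfl
  rw [e1]
  have e2 : ∑ k ∈ Finset.range N, G k = ∑ k ∈ Finset.range (N - 1), G k := by
    symm
    apply Finset.sum_subset (Finset.range_subset_range.2 (Nat.sub_le N 1))
    intro k hk hk'
    rw [Finset.mem_range] at hk
    rw [Finset.mem_range] at hk'
    rw [hG]
    have : ¬ (k + 1 < N) := by omega
    simp [this]
  rw [e2, adjSum]
  apply Finset.sum_congr rfl
  intro k hk
  rw [Finset.mem_range] at hk
  have h1 : k + 1 < N := by omega
  have h2 : k < N := by omega
  rw [hG]
  simp only [dif_pos h1]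
  rw [extz, extz, dif_pos h1, dif_pos h2, abs_sub_comm]

lemma edgesum_HV (N : ℕ) (F : Fin N × Fin N → ℤ) :
    edgesum N F = Hsum N F + Vsum N F := by
  rw [edgesum_decomp]
  congr 1
  · rw [Fintype.sum_prod_type, Hsum]
    exact Finset.sum_congr rfl (fun i _ => row_hterm N F i)
  · rw [Fintype.sum_prod_type, Finset.sum_comm, Vsum]
    exact Finset.sum_congr rfl (fun j _ => col_vterm N F j)

lemma Vsum_pair_le (N : ℕ) (F G : Fin N × Fin N → ℤ)
    (h : ∀ (k : ℕ) (hk : k + 1 < N),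
      ∑ j : Fin N, |G (⟨k+1, hk⟩, j) - G (⟨k, Nat.lt_of_succ_lt hk⟩, j)|
      ≤ ∑ j : Fin N, |F (⟨k+1, hk⟩, j) - F (⟨k, Nat.lt_of_succ_lt hk⟩, j)|) :
    Vsum N G ≤ Vsum N F := by
  have repr : ∀ H : Fin N × Fin N → ℤ, Vsum N H = ∑ k ∈ Finset.range (N-1),
      ∑ j : Fin N, |extz N (fun i => H (i, j)) (k+1) - extz N (fun i => H (i, j)) k| := by
    intro H
    rw [Vsum]
    simp only [adjSum]
    exact Finset.sum_comm
  rw [repr, repr]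
  apply Finset.sum_le_sum
  intro k hk
  rw [Finset.mem_range] at hk
  have hk1 : k + 1 < N := by omega
  have hk0 : k < N := by omega
  have e : ∀ (H : Fin N × Fin N → ℤ) (j : Fin N),
      |extz N (fun i => H (i, j)) (k+1) - extz N (fun i => H (i, j)) k|
      = |H (⟨k+1, hk1⟩, j) - H (⟨k, hk0⟩, j)| := by
    intro H j
    rw [extz, extz, dif_pos hk1, dif_pos hk0]
  rw [Finset.sum_congr rfl (fun j _ => e G j), Finset.sum_congr rfl (fun j _ => e F j)]
  exact h k hk1

lemma Hsum_pair_le (N : ℕ) (F G : Fin N × Fin N → ℤ)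
    (h : ∀ (k : ℕ) (hk : k + 1 < N),
      ∑ i : Fin N, |G (i, ⟨k+1, hk⟩) - G (i, ⟨k, Nat.lt_of_succ_lt hk⟩)|
      ≤ ∑ i : Fin N, |F (i, ⟨k+1, hk⟩) - F (i, ⟨k, Nat.lt_of_succ_lt hk⟩)|) :
    Hsum N G ≤ Hsum N F := by
  have repr : ∀ H : Fin N × Fin N → ℤ, Hsum N H = ∑ k ∈ Finset.range (N-1),
      ∑ i : Fin N, |extz N (fun j => H (i, j)) (k+1) - extz N (fun j => H (i, j)) k| := by
    intro H
    rw [Hsum]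
    simp only [adjSum]
    exact Finset.sum_comm
  rw [repr, repr]
  apply Finset.sum_le_sum
  intro k hk
  rw [Finset.mem_range] at hk
  have hk1 : k + 1 < N := by omega
  have hk0 : k < N := by omega
  have e : ∀ (H : Fin N × Fin N → ℤ) (i : Fin N),
      |extz N (fun j => H (i, j)) (k+1) - extz N (fun j => H (i, j)) k|
      = |H (i, ⟨k+1, hk1⟩) - H (i, ⟨k, hk0⟩)| := by
    intro H i
    rw [extz, extz, dif_pos hk1, dif_pos hk0]
  rw [Finset.sum_congr rfl (fun i _ => e G i), Finset.sum_congr rfl (fun i _ => e F i)]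
  exact h k hk1

/-- For every bijective enumeration `f` of the `N × N` lattice there is a
horizontally and vertically ordered bijective enumeration `g` whose edgesum is
no larger. -/
theorem exists_ordered_enumeration_le (N : ℕ) (f : (Fin N × Fin N) ≃ Fin (N * N)) :
    ∃ g : (Fin N × Fin N) ≃ Fin (N * N),
      (∀ i : Fin N, StrictMono fun j : Fin N => g (i, j)) ∧
      (∀ j : Fin N, StrictMono fun i : Fin N => g (i, j)) ∧
      edgesum N (fun v => ((g v : ℕ) : ℤ)) ≤ edgesum N (fun v => ((f v : ℕ) : ℤ)) := by
  classical
  set castZ : Fin (N * N) → ℤ := fun k => ((k : ℕ) : ℤ) with hcast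
  have castMono : Monotone castZ := by
    intro a b h
    simp only [hcast]
    exact_mod_cast h
  -- row sort
  set σr : Fin N → Equiv.Perm (Fin N) := fun i => Tuple.sort (fun j => f (i, j)) with hσr
  set f1 : (Fin N × Fin N) ≃ Fin (N * N) :=
    (Equiv.prodShear (Equiv.refl (Fin N)) σr).trans f with hf1def
  have hf1 : ∀ i j, f1 (i, j) = f (i, σr i j) := fun i j => rfl
  have hrow1 : ∀ i : Fin N, Monotone (fun j => castZ (f1 (i, j))) := by
    intro i
    have h1 : Monotone ((fun j => f (i, j)) ∘ (σr i)) := Tuple.monotone_sort _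
    exact castMono.comp h1
  -- column sort
  set τc : Fin N → Equiv.Perm (Fin N) := fun j => Tuple.sort (fun i => f1 (i, j)) with hτc
  set f2 : (Fin N × Fin N) ≃ Fin (N * N) :=
    ((Equiv.prodComm (Fin N) (Fin N)).trans
      ((Equiv.prodShear (Equiv.refl (Fin N)) τc).trans
        (Equiv.prodComm (Fin N) (Fin N)))).trans f1 with hf2def
  have hf2 : ∀ i j, f2 (i, j) = f1 (τc j i, j) := fun i j => rfl
  have hcol2 : ∀ j : Fin N, Monotone (fun i => castZ (f2 (i, j))) := by
    intro j
    have h1 : Monotone ((fun i => f1 (i, j)) ∘ (τc j)) := Tuple.monotone_sort _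
    exact castMono.comp h1
  -- rows of f2 stay sorted
  have hadj2 : ∀ (i : Fin N) (k : ℕ) (hk : k + 1 < N),
      castZ (f2 (i, ⟨k, Nat.lt_of_succ_lt hk⟩)) ≤ castZ (f2 (i, ⟨k+1, hk⟩)) := by
    intro i k hk
    have hk0 : k < N := Nat.lt_of_succ_lt hk
    refine sorted_le_sorted
      (fun i' => castZ (f1 (i', ⟨k, hk0⟩))) (fun i' => castZ (f1 (i', ⟨k+1, hk⟩)))
      (fun i' => castZ (f2 (i', ⟨k, hk0⟩))) (fun i' => castZ (f2 (i', ⟨k+1, hk⟩)))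
      (τc ⟨k, hk0⟩) (τc ⟨k+1, hk⟩) (fun i' => rfl) (fun i' => rfl)
      (hcol2 _) (hcol2 _) ?_ i
    intro i'
    exact hrow1 i' (show (⟨k, hk0⟩ : Fin N) ≤ ⟨k+1, hk⟩ by
      simp [Fin.le_def])
  have hrow2 : ∀ i : Fin N, Monotone (fun j => castZ (f2 (i, j))) := by
    intro i
    exact mono_of_adj _ (fun k hk => hadj2 i k hk)
  -- transfer to Fin-valued monotonicity and strictness
  have finMono : ∀ (c : Fin N → Fin (N * N)), Monotone (fun j => castZ (c j)) → Monotone c := by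
    intro c h a b hab
    have := h hab
    simp only [hcast] at this
    exact_mod_cast this
  refine ⟨f2, ?_, ?_, ?_⟩
  · intro i
    refine (finMono _ (hrow2 i)).strictMono_of_injective ?_
    intro a b hab
    have := f2.injective hab
    exact (Prod.ext_iff.mp this).2
  · intro j
    refine (finMono _ (hcol2 j)).strictMono_of_injective ?_
    intro a b hab
    have := f2.injective hab
    exact (Prod.ext_iff.mp this).1
  · -- edgesum inequality
    set F : Fin N × Fin N → ℤ := fun v => castZ (f v) with hF
    set F1 : Fin N × Fin N → ℤ := fun v => castZ (f1 v) with hF1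
    set F2 : Fin N × Fin N → ℤ := fun v => castZ (f2 v) with hF2
    show edgesum N F2 ≤ edgesum N F
    rw [edgesum_HV, edgesum_HV]
    have hH1 : Hsum N F1 ≤ Hsum N F := by
      apply Finset.sum_le_sum
      intro i _
      exact adjSum_sorted_le N (fun j => F (i, j)) (fun j => F1 (i, j)) (σr i)
        (fun j => rfl) (hrow1 i)
    have hV1 : Vsum N F1 ≤ Vsum N F := by
      apply Vsum_pair_le
      intro k hk
      exact sorted_pair_le
        (fun j => F (⟨k+1, hk⟩, j)) (fun j => F (⟨k, Nat.lt_of_succ_lt hk⟩, j))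
        (fun j => F1 (⟨k+1, hk⟩, j)) (fun j => F1 (⟨k, Nat.lt_of_succ_lt hk⟩, j))
        (σr ⟨k+1, hk⟩) (σr ⟨k, Nat.lt_of_succ_lt hk⟩)
        (fun j => rfl) (fun j => rfl) (hrow1 _) (hrow1 _)
    have hV2 : Vsum N F2 ≤ Vsum N F1 := by
      apply Finset.sum_le_sum
      intro j _
      exact adjSum_sorted_le N (fun i => F1 (i, j)) (fun i => F2 (i, j)) (τc j)
        (fun i => rfl) (hcol2 j)
    have hH2 : Hsum N F2 ≤ Hsum N F1 := by
      apply Hsum_pair_le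
      intro k hk
      exact sorted_pair_le
        (fun i => F1 (i, ⟨k+1, hk⟩)) (fun i => F1 (i, ⟨k, Nat.lt_of_succ_lt hk⟩))
        (fun i => F2 (i, ⟨k+1, hk⟩)) (fun i => F2 (i, ⟨k, Nat.lt_of_succ_lt hk⟩))
        (τc ⟨k+1, hk⟩) (τc ⟨k, Nat.lt_of_succ_lt hk⟩)
        (fun i => rfl) (fun i => rfl) (hcol2 _) (hcol2 _)
    omega
end

section
/- For the (n×n)×(N×N) cellular arrangement graph with cell-local Z-pattern enumeration f_{Z'} and global Z-pattern enumeration f_Z, the ratio of edgesums satisfies lim_{N→∞} C¹(f_{Z'})/C¹(f_Z) = n²/(n³ − n² + n), which is O(1/n). -/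
open Polynomial Filter

/-- For the `(n×n)×(N×N)` cellular arrangement graph, the ratio of the edgesum
of the cell-local Z-pattern to that of the global Z-pattern tends to
`n²/(n³ − n² + n)` as `N → ∞`. -/
theorem cellular_edgesum_ratio (n : ℕ) (hn : 2 ≤ n) :
    Filter.Tendsto (fun N : ℝ =>
      (N ^ 3 * (n : ℝ) ^ 2 + (n : ℝ) ^ 3 * N ^ 2 - (n : ℝ) ^ 2 * N ^ 2
        - 2 * (n : ℝ) * N ^ 2 - (n : ℝ) ^ 2 * N + 2 * N ^ 2 + 2 * (n : ℝ) * N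
        + (n : ℝ) ^ 2 - 2 * N - (n : ℝ)) /
      ((N * (n : ℝ)) ^ 3 - N * (n : ℝ) - N * (N - 1) * ((n : ℝ) - 1)
        - (n : ℝ) * N ^ 2 * ((n : ℝ) - 1) * (N - 1)))
      Filter.atTop
      (nhds ((n : ℝ) ^ 2 / ((n : ℝ) ^ 3 - (n : ℝ) ^ 2 + (n : ℝ)))) := by
  set a : ℝ := (n : ℝ) with ha_def
  have ha : (2 : ℝ) ≤ a := by rw [ha_def]; exact_mod_cast hn
  have ha2 : a ^ 2 ≠ 0 := by positivity
  have hb3 : a ^ 3 - a ^ 2 + a ≠ 0 := by nlinarith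
  set p : ℝ[X] := C (a ^ 2) * X ^ 3 + C (a ^ 3 - a ^ 2 - 2 * a + 2) * X ^ 2
      + C (-a ^ 2 + 2 * a - 2) * X + C (a ^ 2 - a) with hp
  set q : ℝ[X] := C (a ^ 3 - a ^ 2 + a) * X ^ 3 + C ((a - 1) ^ 2) * X ^ 2
      + C (-1) * X + C 0 with hq
  have hdeg : p.degree = q.degree := by
    rw [hp, hq, Polynomial.degree_cubic ha2, Polynomial.degree_cubic hb3]
  have h := Polynomial.div_tendsto_leadingCoeff_div_of_degree_eq p q hdeg
  rw [hp, hq, Polynomial.leadingCoeff_cubic ha2, Polynomial.leadingCoeff_cubic hb3] at h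
  refine h.congr fun N => ?_
  simp only [hp, hq, Polynomial.eval_add, Polynomial.eval_mul, Polynomial.eval_pow,
    Polynomial.eval_C, Polynomial.eval_X]
  ring_nf
end
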